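/- Let ω = (ω_n)_n be any sequence with ω_n a density matrix on (ℂ^d)^⊗n. For γ ∈ ℝ set A_n(γ) := ω_n − 2^{−nγ}·1_n, and define the spectral sup-entropy rate S̄(ω) := inf{ γ ∈ ℝ : liminf_{n→∞} Tr[{A_n(γ) ≥ 0}·A_n(γ)] = 1 }. Then S̄(ω) = inf{ R ∈ ℝ : there exist orthogonal projections P_n on (ℂ^d)^⊗n such that Tr(P_n ω_n) → 1 as n → ∞ and limsup_{n→∞} (1/n) log(Tr P_n) ≤ R }. -/

import Mathlib

open scoped BigOperators ComplexOrder
open Matrix Filter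

noncomputable section

/-- Square matrices on `ℂ^d`. -/
abbrev Mat (d : ℕ) := Matrix (Fin d) (Fin d) ℂ

/-- Operators on the `n`-fold tensor power `(ℂ^d)^⊗n`, identified with matrices indexed by
`Fin n → Fin d`. -/
abbrev MatN (d n : ℕ) := Matrix (Fin n → Fin d) (Fin n → Fin d) ℂ

/-- A density matrix: positive semidefinite with unit trace. -/
def IsDensity {m : Type*} [Fintype m] [DecidableEq m] (ρ : Matrix m m ℂ) : Prop :=
  ρ.PosSemidef ∧ ρ.trace = 1

/-- The trace norm `‖X‖₁ = Tr √(XᴴX)`. -/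
noncomputable def traceNorm {m : Type*} [Fintype m] [DecidableEq m] (X : Matrix m m ℂ) : ℝ :=
  (((Matrix.posSemidef_conjTranspose_mul_self X).1.eigenvectorUnitary : Matrix m m ℂ) *
      Matrix.diagonal ((fun x : ℝ => ((√x : ℝ) : ℂ)) ∘
        (Matrix.posSemidef_conjTranspose_mul_self X).1.eigenvalues) *
      (star (Matrix.posSemidef_conjTranspose_mul_self X).1.eigenvectorUnitary : Matrix m m ℂ)).trace.re

/-- The `n`-fold tensor power `ρ^⊗n`. -/
def tpow {d : ℕ} (ρ : Mat d) (n : ℕ) : MatN d n := fun x y => ∏ i, ρ (x i) (y i)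

/-- The tensor power of `ρ` over the sites in `I ⊆ [n]`. -/
def tpowOn {d n : ℕ} (ρ : Mat d) (I : Finset (Fin n)) :
    Matrix ((i : I) → Fin d) ((i : I) → Fin d) ℂ := fun x y => ∏ i, ρ (x i) (y i)

/-- Combine a configuration on `I` with a configuration on its complement. -/
def combine {α : Type*} {n : ℕ} (I : Finset (Fin n)) (x : (i : I) → α)
    (c : (j : {j : Fin n // j ∉ I}) → α) : Fin n → α :=
  fun j => if h : j ∈ I then x ⟨j, h⟩ else c ⟨j, h⟩

/-- The marginal (partial trace over the sites outside `I`) of a state on `(ℂ^d)^⊗n`. -/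
noncomputable def marginal {d n : ℕ} (ρn : MatN d n) (I : Finset (Fin n)) :
    Matrix ((i : I) → Fin d) ((i : I) → Fin d) ℂ :=
  fun x y => ∑ c : (j : {j : Fin n // j ∉ I}) → Fin d, ρn (combine I x c) (combine I y c)

/-- A sequence of states `ρ_n` on `(ℂ^d)^⊗n` is weakly almost i.i.d. along `ρ` if for each
fixed `k ≥ 1` the average over all `k`-element subsets `I ⊆ [n]` of
`‖(ρ_n)_I − ρ^⊗k‖₁` tends to `0` as `n → ∞`. -/
def WeaklyAlmostIID {d : ℕ} (ρ : Mat d) (ρseq : ∀ n, MatN d n) : Prop :=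
  ∀ k : ℕ, 0 < k →
    Tendsto (fun n : ℕ =>
        (∑ I ∈ Finset.powersetCard k (Finset.univ : Finset (Fin n)),
          traceNorm (marginal (ρseq n) I - tpowOn ρ I)) / (n.choose k : ℝ))
      atTop (nhds 0)

/-- `A^(i) = 1 ⊗ ⋯ ⊗ A ⊗ ⋯ ⊗ 1` with `A` in the `i`-th tensor factor. -/
def embedAt {d : ℕ} (n : ℕ) (A : Mat d) (i : Fin n) : MatN d n :=
  fun x y => if ∀ j, j ≠ i → x j = y j then A (x i) (y i) else 0

/-- The empirical average `Ā_n = (1/n) Σ_i A^(i)`. -/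
noncomputable def avgObs {d : ℕ} (n : ℕ) (A : Mat d) : MatN d n :=
  (n : ℂ)⁻¹ • ∑ i : Fin n, embedAt n A i

open Classical in
/-- The spectral projection of a Hermitian matrix `Q` onto the span of eigenvectors whose
eigenvalue satisfies the predicate `S` (junk value `0` if `Q` is not Hermitian). -/
noncomputable def specProj {m : Type*} [Fintype m] [DecidableEq m]
    (S : ℝ → Prop) (Q : Matrix m m ℂ) : Matrix m m ℂ :=
  if hQ : Q.IsHermitian then
    (hQ.eigenvectorUnitary : Matrix m m ℂ) *
      Matrix.diagonal (fun i => if S (hQ.eigenvalues i) then (1 : ℂ) else 0) *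
      star (hQ.eigenvectorUnitary : Matrix m m ℂ)
  else 0

open Classical in
/-- Functional calculus for a Hermitian matrix (junk value `0` if not Hermitian). -/
noncomputable def mfun {m : Type*} [Fintype m] [DecidableEq m]
    (f : ℝ → ℝ) (Q : Matrix m m ℂ) : Matrix m m ℂ :=
  if hQ : Q.IsHermitian then
    (hQ.eigenvectorUnitary : Matrix m m ℂ) *
      Matrix.diagonal (fun i => (f (hQ.eigenvalues i) : ℂ)) *
      star (hQ.eigenvectorUnitary : Matrix m m ℂ)
  else 0

/-- The matrix logarithm (base 2) via functional calculus. -/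
noncomputable def matLog {m : Type*} [Fintype m] [DecidableEq m] (Q : Matrix m m ℂ) :
    Matrix m m ℂ := mfun (Real.logb 2) Q

/-- The von Neumann entropy `S(ρ) = −Tr(ρ log ρ)` (base-2 logarithm, on the support). -/
noncomputable def vN {m : Type*} [Fintype m] [DecidableEq m] (ρ : Matrix m m ℂ) : ℝ :=
  -(Matrix.trace (ρ * matLog ρ)).re

/-- The operator norm `‖A‖_∞`. -/
noncomputable def opNorm {m : Type*} [Fintype m] [DecidableEq m] (A : Matrix m m ℂ) : ℝ :=
  ‖Matrix.toEuclideanCLM (𝕜 := ℂ) A‖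


/-- The spectral sup-entropy rate
`S̄(ω) := inf{ γ : liminf_n Tr[{A_n(γ) ≥ 0}·A_n(γ)] = 1 }` with
`A_n(γ) := ω_n − 2^{−nγ}·1_n`. -/
noncomputable def Sbar (d : ℕ) (ω : ∀ n, MatN d n) : ℝ :=
  sInf {γ : ℝ | Filter.liminf (fun n : ℕ =>
    (Matrix.trace (specProj (fun t => 0 ≤ t)
        (ω n - ((((2 : ℝ) ^ (-((n : ℝ) * γ)) : ℝ) : ℂ)) • 1) *
      (ω n - ((((2 : ℝ) ^ (-((n : ℝ) * γ)) : ℝ) : ℂ)) • 1))).re) atTop = 1}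

end

/-!
Write `F_n(γ) = Tr[{A_n(γ) ≥ 0} A_n(γ)]`. In an eigenbasis of `A_n(γ)` every orthogonal
projection `Q` has diagonal weights in `[0, 1]`, so
`Tr(Q ω_n) − 2^{−nγ} Tr Q = Tr(Q A_n(γ)) ≤ F_n(γ)`, with equality for the spectral projection
`P_n = {A_n(γ) ≥ 0}`; moreover `0 ≤ F_n(γ) ≤ 1`.

If `liminf F_n(γ) = 1`, then `F_n(γ) → 1`, hence `Tr(P_n ω_n) → 1`, and `2^{−nγ} Tr P_n ≤ 1`
gives `(1/n) log Tr P_n ≤ γ`: the rate `γ` is achievable. Conversely, if projections `P_n`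
achieve the rate `R`, then eventually `Tr P_n ≤ 2^{n(R + η/2)}`, so
`F_n(R + η) ≥ Tr(P_n ω_n) − 2^{−nη/2} → 1`. The two sets therefore have the same infimum.
-/

open Real
open scoped MatrixOrder

theorem Filter.tendsto_of_liminf_eq_of_forall_le {α β : Type*}
    [ConditionallyCompleteLinearOrder β] [TopologicalSpace β] [OrderTopology β]
    {f : Filter α} [f.NeBot] {u : α → β} {a b : β} (hb : ∀ x, b ≤ u x) (ha : ∀ x, u x ≤ a)
    (h : liminf u f = a) : Tendsto u f (nhds a) := by
  have hbdd : IsBoundedUnder (· ≤ ·) f u := isBoundedUnder_of ⟨a, ha⟩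
  have hbdd' : IsBoundedUnder (· ≥ ·) f u := isBoundedUnder_of ⟨b, hb⟩
  refine tendsto_of_liminf_eq_limsup h (le_antisymm ?_ ?_) hbdd hbdd'
  · exact limsup_le_of_le hbdd'.isCoboundedUnder_le (Eventually.of_forall ha)
  · exact h ▸ liminf_le_limsup hbdd hbdd'

theorem Real.sInf_eq_sInf_of_forall_add_mem {S T : Set ℝ} (hST : S ⊆ T)
    (hTS : ∀ R ∈ T, ∀ η > 0, R + η ∈ S) (hT : T.Nonempty) (hTb : BddBelow T) :
    sInf S = sInf T := by
  obtain ⟨R, hR⟩ := hT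
  refine le_antisymm (le_csInf ⟨R, hR⟩ fun R hR => ?_)
    (csInf_le_csInf hTb ⟨R + 1, hTS R hR 1 one_pos⟩ hST)
  exact le_of_forall_pos_le_add fun η hη => csInf_le (hTb.mono hST) (hTS R hR η hη)

theorem Real.logb_div_le_of_rpow_neg_mul_le {b x γ : ℝ} {n : ℕ} (hb : 1 < b) (hn : 0 < n)
    (hx : 0 < x) (h : b ^ (-((n : ℝ) * γ)) * x ≤ 1) : logb b x / n ≤ γ := by
  rw [div_le_iff₀ (by exact_mod_cast hn), logb_le_iff_le_rpow hb hx, mul_comm γ]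
  rwa [rpow_neg (by positivity), inv_mul_le_iff₀ (by positivity), mul_one] at h

theorem Real.le_rpow_of_logb_div_lt {b x r : ℝ} {n : ℕ} (hb : 1 < b) (hn : 0 < n) (hx : 0 ≤ x)
    (h : logb b x / n < r) : x ≤ b ^ ((n : ℝ) * r) := by
  rcases hx.eq_or_lt with rfl | hpos
  · have : 0 < b := by linarith
    positivity
  · rw [div_lt_iff₀ (by exact_mod_cast hn), mul_comm] at h
    exact ((logb_lt_iff_lt_rpow hb hpos).mp h).le

namespace Matrix

theorem IsHermitian.sub_real_smul_one {m : Type*} [DecidableEq m] {ρ : Matrix m m ℂ}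
    (hρ : ρ.IsHermitian) (ε : ℝ) : (ρ - (ε : ℂ) • 1).IsHermitian :=
  hρ.sub (by simp [IsHermitian, conjTranspose_smul])

section

variable {m : Type*} [Fintype m]

theorem IsHermitian.ofReal_re_trace_mul {Q B : Matrix m m ℂ} (hQ : Q.IsHermitian)
    (hB : B.IsHermitian) : ((trace (Q * B)).re : ℂ) = trace (Q * B) := by
  refine Complex.conj_eq_iff_re.mp ?_
  rw [starRingEnd_apply, ← trace_conjTranspose, conjTranspose_mul, hQ.eq, hB.eq, trace_mul_comm]

theorem IsStarProjection.posSemidef {Q : Matrix m m ℂ} (hQ : IsStarProjection Q) :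
    Q.PosSemidef :=
  nonneg_iff_posSemidef.mp hQ.nonneg

theorem IsStarProjection.re_trace_nonneg {Q : Matrix m m ℂ} (hQ : IsStarProjection Q) :
    0 ≤ (trace Q).re :=
  (Complex.nonneg_iff.mp hQ.posSemidef.trace_nonneg).1

variable [DecidableEq m] {A Q ρ : Matrix m m ℂ}

theorem re_trace_mul_sub_smul_one (Q ρ : Matrix m m ℂ) (ε : ℝ) :
    (trace (Q * (ρ - (ε : ℂ) • 1))).re = (trace (Q * ρ)).re - ε * (trace Q).re := by
  simp [mul_sub, trace_sub, trace_smul, Complex.mul_re]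

theorem IsStarProjection.re_trace_le_card (hQ : IsStarProjection Q) :
    (trace Q).re ≤ Fintype.card m := by
  simpa [trace_sub] using hQ.one_sub.re_trace_nonneg

theorem IsHermitian.trace_mul_eq_sum (hA : A.IsHermitian) (Q : Matrix m m ℂ) :
    trace (Q * A) = ∑ i, (star (hA.eigenvectorUnitary : Matrix m m ℂ) * Q *
      hA.eigenvectorUnitary) i i * hA.eigenvalues i := by
  conv_lhs => rw [hA.spectral_theorem, Unitary.conjStarAlgAut_apply]
  rw [← mul_assoc, trace_mul_cycle, ← mul_assoc]
  simp [trace, mul_diagonal]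

theorem IsStarProjection.re_diag_unitary_conj_mem_Icc (hQ : IsStarProjection Q)
    (U : unitaryGroup m ℂ) (i : m) :
    ((star (U : Matrix m m ℂ) * Q * U) i i).re ∈ Set.Icc 0 1 := by
  have hpsd : ∀ {P : Matrix m m ℂ}, IsStarProjection P →
      (star (U : Matrix m m ℂ) * P * U).PosSemidef :=
    fun hP => hP.posSemidef.conjTranspose_mul_mul_same _
  have h1 := (hpsd hQ).diag_nonneg (i := i)
  have h2 := (hpsd hQ.one_sub).diag_nonneg (i := i)
  rw [mul_sub, sub_mul, mul_one, Unitary.star_mul_self_of_mem U.2] at h2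
  simp only [sub_apply, one_apply_eq] at h2
  exact ⟨(Complex.nonneg_iff.mp h1).1, by simpa using (Complex.nonneg_iff.mp h2).1⟩

theorem IsStarProjection.exists_re_trace_mul_eq_sum (hQ : IsStarProjection Q)
    (hA : A.IsHermitian) :
    ∃ c : m → ℝ, (∀ i, c i ∈ Set.Icc 0 1) ∧
      (trace (Q * A)).re = ∑ i, c i * hA.eigenvalues i ∧ (trace Q).re = ∑ i, c i := by
  let U : Matrix m m ℂ := hA.eigenvectorUnitary
  refine ⟨fun i => ((star U * Q * U) i i).re, hQ.re_diag_unitary_conj_mem_Icc _, ?_, ?_⟩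
  · simp [U, hA.trace_mul_eq_sum, Complex.re_sum, Complex.mul_re]
  · have hU : U * star U = 1 := Unitary.mul_star_self_of_mem hA.eigenvectorUnitary.2
    have hconj : trace (star U * Q * U) = trace Q := by rw [trace_mul_cycle, hU, one_mul]
    rw [← hconj, trace, Complex.re_sum]
    rfl

theorem IsDensity.sum_eigenvalues (hρ : IsDensity ρ) : ∑ i, hρ.1.1.eigenvalues i = 1 := by
  have h := hρ.1.1.trace_eq_sum_eigenvalues
  simp only [hρ.2] at h
  simpa using (congrArg Complex.re h).symm

theorem IsDensity.eigenvalues_le_one (hρ : IsDensity ρ) (i : m) : hρ.1.1.eigenvalues i ≤ 1 :=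
  hρ.sum_eigenvalues ▸ Finset.single_le_sum (fun j _ => hρ.1.eigenvalues_nonneg j)
    (Finset.mem_univ i)

theorem IsStarProjection.re_trace_mul_le_one (hQ : IsStarProjection Q) (hρ : IsDensity ρ) :
    (trace (Q * ρ)).re ≤ 1 := by
  obtain ⟨c, hc, htr, -⟩ := hQ.exists_re_trace_mul_eq_sum hρ.1.1
  rw [htr, ← hρ.sum_eigenvalues]
  exact Finset.sum_le_sum fun i _ =>
    mul_le_of_le_one_left (hρ.1.eigenvalues_nonneg i) (hc i).2

theorem IsStarProjection.re_trace_mul_le_re_trace (hQ : IsStarProjection Q)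
    (hρ : IsDensity ρ) : (trace (Q * ρ)).re ≤ (trace Q).re := by
  obtain ⟨c, hc, htr, htrQ⟩ := hQ.exists_re_trace_mul_eq_sum hρ.1.1
  rw [htr, htrQ]
  exact Finset.sum_le_sum fun i _ => mul_le_of_le_one_right (hc i).1 (hρ.eigenvalues_le_one i)

open Classical in
theorem specProj_eq (hA : A.IsHermitian) (S : ℝ → Prop) :
    specProj S A = (hA.eigenvectorUnitary : Matrix m m ℂ) *
      diagonal (fun i => if S (hA.eigenvalues i) then (1 : ℂ) else 0) *
      star (hA.eigenvectorUnitary : Matrix m m ℂ) := by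
  rw [specProj, dif_pos hA]

theorem isStarProjection_specProj (hA : A.IsHermitian) (S : ℝ → Prop) :
    IsStarProjection (specProj S A) := by
  classical
  have hD : IsStarProjection
      (diagonal (fun i => if S (hA.eigenvalues i) then (1 : ℂ) else 0)) :=
    ⟨by rw [IsIdempotentElem, diagonal_mul_diagonal]; congr 1; ext i; split_ifs <;> simp,
     isHermitian_diagonal_of_self_adjoint _ (by ext i; split_ifs <;> simp [*])⟩
  rw [specProj_eq hA]
  exact hD.map (Unitary.conjStarAlgAut ℂ _ hA.eigenvectorUnitary)

noncomputable def posPartTrace (A : Matrix m m ℂ) : ℝ :=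
  (trace (specProj (fun t => 0 ≤ t) A * A)).re

theorem IsHermitian.posPartTrace_eq_sum (hA : A.IsHermitian) :
    posPartTrace A = ∑ i, max (hA.eigenvalues i) 0 := by
  classical
  have hU : star (hA.eigenvectorUnitary : Matrix m m ℂ) * hA.eigenvectorUnitary = 1 :=
    Unitary.star_mul_self_of_mem hA.eigenvectorUnitary.2
  have hdiag : star (hA.eigenvectorUnitary : Matrix m m ℂ) * specProj (fun t => 0 ≤ t) A *
      hA.eigenvectorUnitary =
        diagonal (fun i => if 0 ≤ hA.eigenvalues i then (1 : ℂ) else 0) := by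
    rw [specProj_eq hA]
    simp only [← mul_assoc, hU, one_mul]
    rw [mul_assoc, hU, mul_one]
  rw [posPartTrace, hA.trace_mul_eq_sum, hdiag, Complex.re_sum]
  refine Finset.sum_congr rfl fun i _ => ?_
  rw [diagonal_apply_eq]
  split_ifs with h
  · simp [h]
  · simp [(not_le.mp h).le]

theorem IsStarProjection.re_trace_mul_le_posPartTrace (hQ : IsStarProjection Q)
    (hA : A.IsHermitian) : (trace (Q * A)).re ≤ posPartTrace A := by
  obtain ⟨c, hc, htr, -⟩ := hQ.exists_re_trace_mul_eq_sum hA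
  rw [htr, hA.posPartTrace_eq_sum]
  refine Finset.sum_le_sum fun i _ => ?_
  have hmax := le_max_left (hA.eigenvalues i) 0
  have hmax0 := le_max_right (hA.eigenvalues i) 0
  nlinarith [(hc i).1, (hc i).2]

theorem posPartTrace_nonneg (hA : A.IsHermitian) : 0 ≤ posPartTrace A := by
  simpa using (IsStarProjection.zero (Matrix m m ℂ)).re_trace_mul_le_posPartTrace hA

theorem posPartTrace_sub_smul_one_eq (ρ : Matrix m m ℂ) (ε : ℝ) :
    posPartTrace (ρ - (ε : ℂ) • 1) =
      (trace (specProj (fun t => 0 ≤ t) (ρ - (ε : ℂ) • 1) * ρ)).re -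
        ε * (trace (specProj (fun t => 0 ≤ t) (ρ - (ε : ℂ) • 1))).re :=
  re_trace_mul_sub_smul_one _ _ _

theorem IsStarProjection.sub_le_posPartTrace (hQ : IsStarProjection Q) (hρ : ρ.IsHermitian)
    (ε : ℝ) : (trace (Q * ρ)).re - ε * (trace Q).re ≤ posPartTrace (ρ - (ε : ℂ) • 1) := by
  rw [← re_trace_mul_sub_smul_one]
  exact hQ.re_trace_mul_le_posPartTrace (hρ.sub_real_smul_one ε)

theorem IsDensity.posPartTrace_sub_smul_one_le_one (hρ : IsDensity ρ) {ε : ℝ} (hε : 0 ≤ ε) :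
    posPartTrace (ρ - (ε : ℂ) • 1) ≤ 1 := by
  have hP := isStarProjection_specProj (hρ.1.1.sub_real_smul_one ε) (fun t => 0 ≤ t)
  rw [posPartTrace_sub_smul_one_eq]
  nlinarith [hP.re_trace_mul_le_one hρ, hP.re_trace_nonneg]

end

end Matrix

section Rates

open Matrix

variable {d : ℕ} {ω : ∀ n, MatN d n}

/-- `A_n(γ)`. -/
noncomputable def shiftedState (ω : ∀ n, MatN d n) (γ : ℝ) (n : ℕ) : MatN d n :=
  ω n - (((2 : ℝ) ^ (-((n : ℝ) * γ)) : ℝ) : ℂ) • 1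

def IsAchievableRate (ω : ∀ n, MatN d n) (R : ℝ) : Prop :=
  ∃ P : ∀ n, MatN d n, (∀ n, (P n).IsHermitian ∧ P n * P n = P n) ∧
    Tendsto (fun n => trace (P n * ω n)) atTop (nhds 1) ∧
    limsup (fun n : ℕ => logb 2 (trace (P n)).re / n) atTop ≤ R

theorem Matrix.IsStarProjection.logb_re_trace_div_le {n : ℕ} {Q : MatN d n}
    (hQ : IsStarProjection Q) : logb 2 (trace Q).re / n ≤ logb 2 d := by
  have hd : 0 ≤ logb 2 d := div_nonneg (log_natCast_nonneg d) (log_nonneg one_le_two)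
  refine div_le_of_le_mul₀ n.cast_nonneg hd ?_
  have hcard : (trace Q).re ≤ (d : ℝ) ^ n := by simpa using hQ.re_trace_le_card
  rcases hQ.re_trace_nonneg.eq_or_lt with h0 | hpos
  · rw [← h0, logb_zero]
    positivity
  · calc logb 2 (trace Q).re ≤ logb 2 ((d : ℝ) ^ n) := logb_le_logb_of_le one_lt_two hpos hcard
      _ = logb 2 d * n := by rw [logb_pow]; ring

theorem eventually_neg_one_le_logb_re_trace_div (hω : ∀ n, IsDensity (ω n))
    {P : ∀ n, MatN d n} (hP : ∀ n, IsStarProjection (P n))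
    (h : Tendsto (fun n => (trace (P n * ω n)).re) atTop (nhds 1)) :
    ∀ᶠ n : ℕ in atTop, -1 ≤ logb 2 (trace (P n)).re / n := by
  filter_upwards [h.eventually (eventually_ge_nhds (by norm_num : (2 : ℝ)⁻¹ < 1)),
    eventually_ge_atTop 1] with n hn hn1
  have hhalf : (2 : ℝ)⁻¹ ≤ (trace (P n)).re :=
    hn.trans ((hP n).re_trace_mul_le_re_trace (hω n))
  have hlog : -1 ≤ logb 2 (trace (P n)).re := by
    simpa [logb_inv] using logb_le_logb_of_le one_lt_two (by norm_num) hhalf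
  rw [le_div_iff₀ (by exact_mod_cast hn1)]
  linarith [(Nat.one_le_cast (α := ℝ)).mpr hn1]

theorem isAchievableRate_of_eventually_le (hω : ∀ n, IsDensity (ω n)) {P : ∀ n, MatN d n}
    (hP : ∀ n, (P n).IsHermitian ∧ P n * P n = P n)
    (h : Tendsto (fun n => (trace (P n * ω n)).re) atTop (nhds 1)) {R : ℝ}
    (hR : ∀ᶠ n : ℕ in atTop, logb 2 (trace (P n)).re / n ≤ R) : IsAchievableRate ω R := by
  refine ⟨P, hP, ?_, limsup_le_of_le (isCoboundedUnder_le_of_eventually_le atTop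
    (eventually_neg_one_le_logb_re_trace_div hω (fun n => ⟨(hP n).2, (hP n).1⟩) h)) hR⟩
  have h' := (Complex.continuous_ofReal.tendsto 1).comp h
  rw [Complex.ofReal_one] at h'
  exact h'.congr fun n => (hP n).1.ofReal_re_trace_mul (hω n).1.1

theorem isAchievableRate_logb_dim (hω : ∀ n, IsDensity (ω n)) :
    IsAchievableRate ω (logb 2 d) :=
  isAchievableRate_of_eventually_le hω (fun _ => ⟨isHermitian_one, mul_one 1⟩)
    (by simp [fun n => (hω n).2])
    (Eventually.of_forall fun _ => (IsStarProjection.one _).logb_re_trace_div_le)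

theorem isAchievableRate_of_liminf_eq_one (hω : ∀ n, IsDensity (ω n)) {γ : ℝ}
    (hγ : liminf (fun n => posPartTrace (shiftedState ω γ n)) atTop = 1) :
    IsAchievableRate ω γ := by
  set P := fun n => specProj (fun t => 0 ≤ t) (shiftedState ω γ n)
  have hP (n : ℕ) : IsStarProjection (P n) :=
    isStarProjection_specProj ((hω n).1.1.sub_real_smul_one _) _
  have hF (n : ℕ) : posPartTrace (shiftedState ω γ n) =
      (trace (P n * ω n)).re - (2 : ℝ) ^ (-((n : ℝ) * γ)) * (trace (P n)).re :=
    posPartTrace_sub_smul_one_eq _ _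
  have hF0 (n : ℕ) : 0 ≤ posPartTrace (shiftedState ω γ n) :=
    posPartTrace_nonneg ((hω n).1.1.sub_real_smul_one _)
  have hF1 (n : ℕ) : posPartTrace (shiftedState ω γ n) ≤ 1 :=
    (hω n).posPartTrace_sub_smul_one_le_one (by positivity)
  have htend : Tendsto (fun n => (trace (P n * ω n)).re) atTop (nhds 1) := by
    refine tendsto_of_tendsto_of_tendsto_of_le_of_le
      (tendsto_of_liminf_eq_of_forall_le hF0 hF1 hγ) tendsto_const_nhds (fun n => ?_)
      (fun n => (hP n).re_trace_mul_le_one (hω n))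
    have := mul_nonneg (by positivity : (0 : ℝ) ≤ 2 ^ (-((n : ℝ) * γ))) (hP n).re_trace_nonneg
    linarith [hF n]
  refine isAchievableRate_of_eventually_le hω (fun n => ⟨(hP n).2, (hP n).1⟩) htend ?_
  filter_upwards [htend.eventually (eventually_gt_nhds one_pos), eventually_gt_atTop 0]
    with n hpos hn
  refine logb_div_le_of_rpow_neg_mul_le one_lt_two hn
    (hpos.trans_le ((hP n).re_trace_mul_le_re_trace (hω n))) ?_
  linarith [hF n, hF0 n, (hP n).re_trace_mul_le_one (hω n)]

namespace IsAchievableRate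

variable {R : ℝ}

theorem exists_tendsto_re (hR : IsAchievableRate ω R) :
    ∃ P : ∀ n, MatN d n, (∀ n, IsStarProjection (P n)) ∧
      Tendsto (fun n => (trace (P n * ω n)).re) atTop (nhds 1) ∧
      limsup (fun n : ℕ => logb 2 (trace (P n)).re / n) atTop ≤ R := by
  obtain ⟨P, hP, htend, hlim⟩ := hR
  refine ⟨P, fun n => ⟨(hP n).2, (hP n).1⟩, ?_, hlim⟩
  simpa [Function.comp_def] using (Complex.continuous_re.tendsto _).comp htend

theorem neg_one_le (hω : ∀ n, IsDensity (ω n)) (hR : IsAchievableRate ω R) : -1 ≤ R := by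
  obtain ⟨P, hP, htend, hlim⟩ := hR.exists_tendsto_re
  refine (le_limsup_of_frequently_le ?_ ?_).trans hlim
  · exact (eventually_neg_one_le_logb_re_trace_div hω hP htend).frequently
  · exact isBoundedUnder_of ⟨logb 2 d, fun n => (hP n).logb_re_trace_div_le⟩

theorem liminf_posPartTrace_eq_one (hω : ∀ n, IsDensity (ω n)) (hR : IsAchievableRate ω R)
    {η : ℝ} (hη : 0 < η) :
    liminf (fun n => posPartTrace (shiftedState ω (R + η) n)) atTop = 1 := by
  obtain ⟨P, hP, htend, hlim⟩ := hR.exists_tendsto_re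
  have hbdd : IsBoundedUnder (· ≤ ·) atTop (fun n : ℕ => logb 2 (trace (P n)).re / n) :=
    isBoundedUnder_of ⟨logb 2 d, fun n => (hP n).logb_re_trace_div_le⟩
  have hsmall : Tendsto (fun n : ℕ => (2 : ℝ) ^ (-((n : ℝ) * (R + η))) * (trace (P n)).re)
      atTop (nhds 0) := by
    refine squeeze_zero' (Eventually.of_forall fun n => ?_) ?_
      (tendsto_pow_atTop_nhds_zero_of_lt_one (by positivity)
        (rpow_lt_one_of_one_lt_of_neg one_lt_two (by linarith : -(η / 2) < 0)))
    · have := (hP n).re_trace_nonneg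
      positivity
    filter_upwards [eventually_lt_of_limsup_lt (hlim.trans_lt (by linarith : R < R + η / 2)) hbdd,
      eventually_gt_atTop 0] with n hn hn0
    calc (2 : ℝ) ^ (-((n : ℝ) * (R + η))) * (trace (P n)).re
        ≤ (2 : ℝ) ^ (-((n : ℝ) * (R + η))) * 2 ^ ((n : ℝ) * (R + η / 2)) :=
          mul_le_mul_of_nonneg_left
            (le_rpow_of_logb_div_lt one_lt_two hn0 (hP n).re_trace_nonneg hn) (by positivity)
      _ = ((2 : ℝ) ^ (-(η / 2))) ^ n := by
          rw [← rpow_add two_pos, ← rpow_natCast, ← rpow_mul zero_le_two]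
          ring_nf
  refine (tendsto_of_tendsto_of_tendsto_of_le_of_le (by simpa using htend.sub hsmall)
    tendsto_const_nhds (fun n => (hP n).sub_le_posPartTrace (hω n).1.1 _)
    (fun n => (hω n).posPartTrace_sub_smul_one_le_one (by positivity))).liminf_eq

end IsAchievableRate

end Rates

theorem stmt_16 {d : ℕ} (ω : ∀ n, MatN d n) (hdens : ∀ n, IsDensity (ω n)) :
    Sbar d ω = sInf {R : ℝ | ∃ P : ∀ n, MatN d n,
      (∀ n, (P n).IsHermitian ∧ P n * P n = P n) ∧
      Tendsto (fun n => Matrix.trace (P n * ω n)) atTop (nhds 1) ∧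
      Filter.limsup (fun n : ℕ => Real.logb 2 (Matrix.trace (P n)).re / n) atTop ≤ R} :=
  Real.sInf_eq_sInf_of_forall_add_mem (fun _ hγ => isAchievableRate_of_liminf_eq_one hdens hγ)
    (fun _ hR _ hη => IsAchievableRate.liminf_posPartTrace_eq_one hdens hR hη)
    ⟨_, isAchievableRate_logb_dim hdens⟩ ⟨-1, fun _ hR => IsAchievableRate.neg_one_le hdens hR⟩
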